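/- arXiv:1911.08809 — 2 statements merged into one kernel-verified Lean document; each statement's English description precedes it below -/
import Mathlib

section
/- If every buyer's value is at most v̄, the distance-based mechanism with reserve price v_h = v̄/2 is 1/2-inefficient: under truthful reporting, for every type profile θ the efficiency loss satisfies max_{x feasible} Σ_{i∈N} v_i·x_i − Σ_{i∈N} v_i·f_i(θ) ≤ k·v̄/2, and this bound is tight in the worst case; moreover, v_h = v̄/2 minimizes the worst-case efficiency loss max(k·v_h, k·(v̄−v_h)) over reserve prices v_h. -/
open scoped Classical NNReal ENNReal

namespace SNA

/-- A reported type `θ'_i = (v'_i, r'_i)`: a (nonnegative) value for one unit together with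
the set of followers to whom the buyer forwards the information. -/
abbrev Profile (N : Type*) := N → ℝ≥0 × Finset N

variable {N : Type*} [Fintype N] [DecidableEq N] [LinearOrder N]

/-- `reachIn θ rs m i`: in the digraph induced by the reported profile `θ` and the
seller's direct-buyer set `rs` (the seller links to every member of `rs`, and each buyer
`j` links to every member of `(θ j).2`), there is a directed path from the seller to `i`
using exactly `m + 1` edges. -/
def reachIn (θ : Profile N) (rs : Finset N) : ℕ → N → Prop
  | 0, i => i ∈ rs
  | m + 1, i => ∃ j, reachIn θ rs m j ∧ i ∈ (θ j).2

/-- Buyer `i` is connected: reachable from the seller. -/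
def Connected (θ : Profile N) (rs : Finset N) (i : N) : Prop :=
  ∃ m, reachIn θ rs m i

/-- `N̂`: the set of connected buyers. -/
noncomputable def Nhat (θ : Profile N) (rs : Finset N) : Finset N :=
  Finset.univ.filter (Connected θ rs)

/-- `d(i)`: the length of a shortest directed path from the seller to `i`
(`⊤` if `i` is not connected). -/
noncomputable def dNet (θ : Profile N) (rs : Finset N) (i : N) : ℕ∞ :=
  sInf {n : ℕ∞ | ∃ m : ℕ, reachIn θ rs m i ∧ n = (m : ℕ∞) + 1}

/-- Reachability from the seller by a directed path that avoids buyer `j`. -/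
def reachInAvoid (θ : Profile N) (rs : Finset N) (j : N) : ℕ → N → Prop
  | 0, i => i ∈ rs ∧ i ≠ j
  | m + 1, i => ∃ a, reachInAvoid θ rs j m a ∧ i ∈ (θ a).2 ∧ i ≠ j

/-- `j` is a critical parent of `i`: both are connected, `j ≠ i`, and every directed path
from the seller to `i` passes through `j`. -/
def CriticalParent (θ : Profile N) (rs : Finset N) (j i : N) : Prop :=
  Connected θ rs i ∧ Connected θ rs j ∧ j ≠ i ∧ ¬ ∃ m, reachInAvoid θ rs j m i

/-- The descendants of `i` in the diffusion critical tree `T(θ)`, i.e. `i` together with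
the connected buyers lying in the subtree of `T(θ)` rooted at `i`; the ancestors of a
buyer in the diffusion critical tree are exactly its critical parents. -/
noncomputable def desc (θ : Profile N) (rs : Finset N) (i : N) : Finset N :=
  Finset.univ.filter fun j => Connected θ rs j ∧ (j = i ∨ CriticalParent θ rs i j)

/-- `N̂₋ᵢ`: the connected buyers with `i` and all of its descendants in the diffusion
critical tree removed. -/
noncomputable def NhatMinus (θ : Profile N) (rs : Finset N) (i : N) : Finset N :=
  Nhat θ rs \ desc θ rs i

/-- The `k'`-th highest element of a multiset of values (as an element of `ℝ≥0∞`):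
`⊤` if `k' ≤ 0`, and `0` if the multiset has fewer than `k'` elements. -/
noncomputable def kthHighest (s : Multiset ℝ≥0) (k' : ℕ) : ℝ≥0∞ :=
  if k' = 0 then ⊤
  else if s.card < k' then 0
  else ((s.sort (· ≤ ·)).getD (s.card - k') 0 : ℝ≥0)

/-- `v*(S, k')`: the `k'`-th highest reported value among the buyers in `S`. -/
noncomputable def vstar (θ : Profile N) (S : Finset N) (k' : ℕ) : ℝ≥0∞ :=
  kthHighest (S.val.map fun i => (θ i).1) k'

/-- The priority order on the connected buyers: ascending order of the distance `d(·)`,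
with ties broken by the fixed linear order on `N` (mergeSort is stable). -/
noncomputable def prioList (θ : Profile N) (rs : Finset N) : List N :=
  ((Nhat θ rs).sort (· ≤ ·)).mergeSort fun i j => decide (dNet θ rs i ≤ dNet θ rs j)

/-- One run of the distance-based mechanism over a list of buyers (in priority order),
given the current winner set `W` and the remaining number of units `k'`; `extra` is an
additional pool of (dummy) values included in every price computation.
Buyer `i` faces the price `p = v*((N̂₋ᵢ ∖ W) + extra, k')` and wins (paying `p`)
iff her reported value is at least `p`. -/
noncomputable def runAux (θ : Profile N) (rs : Finset N) (extra : Multiset ℝ≥0) :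
    List N → Finset N → ℕ → (N → ℕ) × (N → ℝ≥0)
  | [], _, _ => (fun _ => 0, fun _ => 0)
  | i :: rest, W, k' =>
    let p : ℝ≥0∞ :=
      kthHighest (((NhatMinus θ rs i \ W).val.map fun j => (θ j).1) + extra) k'
    if (((θ i).1 : ℝ≥0∞)) ≥ p then
      let out := runAux θ rs extra rest (insert i W) (k' - 1)
      (Function.update out.1 i 1, Function.update out.2 i p.toNNReal)
    else
      let out := runAux θ rs extra rest W k'
      (Function.update out.1 i 0, Function.update out.2 i 0)

/-- The distance-based mechanism: `.1` is the allocation rule `f` (each buyer is mapped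
to `1` if she wins a unit and to `0` otherwise; unconnected buyers get `0`) and `.2` is
the payment rule `t` (unconnected buyers and losers pay `0`). -/
noncomputable def DBM (k : ℕ) (θ : Profile N) (rs : Finset N) : (N → ℕ) × (N → ℝ≥0) :=
  runAux θ rs 0 (prioList θ rs) ∅ k

/-- The distance-based mechanism with reserve price `vh`: `k` dummy buyers of value `vh`,
attached directly to the seller only (hence lying in every `N̂₋ᵢ` and never being
descendants of a real buyer), are added to every price pool, but they are never processed
as bidders and never win a unit. -/
noncomputable def DBMres (k : ℕ) (vh : ℝ≥0) (θ : Profile N) (rs : Finset N) :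
    (N → ℕ) × (N → ℝ≥0) :=
  runAux θ rs (Multiset.replicate k vh) (prioList θ rs) ∅ k

/-- The No-Diffusion-VCG mechanism: VCG applied to the direct buyers only. -/
noncomputable def NDVCG (k : ℕ) (θ : Profile N) (rs : Finset N) : (N → ℕ) × (N → ℝ≥0) :=
  (fun i => if i ∈ rs ∧ (((θ i).1 : ℝ≥0∞)) ≥ vstar θ (rs.erase i) k then 1 else 0,
   fun i => if i ∈ rs ∧ (((θ i).1 : ℝ≥0∞)) ≥ vstar θ (rs.erase i) k
     then (vstar θ (rs.erase i) k).toNNReal else 0)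

/-- The FCFS-F mechanism: the first `k` connected buyers in the priority order get a
unit for free. -/
noncomputable def FCFS (k : ℕ) (θ : Profile N) (rs : Finset N) : (N → ℕ) × (N → ℝ≥0) :=
  (fun i => if i ∈ (prioList θ rs).take k then 1 else 0, fun _ => 0)

end SNA

/-!
The `k` dummy bids of value `vh` make every price at least `vh`, so every winner is worth at
least `vh`. If all `k` units are sold, the mechanism's welfare is therefore at least `k·vh`,
while a feasible allocation is worth at most `k·v̄`. Otherwise a unit is left over, and then every
connected buyer worth more than `vh` wins: a losing such buyer `i` of maximal value faced a price
above her value, so `N̂₋ᵢ ∖ W` contained as many real buyers outbidding her as there were units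
left, and by maximality all of them win later, exhausting the supply. In that case the loss
comes only from buyers worth at most `vh`, hence is at most `k·vh`. The reserve `v̄/2` balances
the two bounds, and a lone buyer worth slightly less than `v̄/2` shows that the bound is tight.
-/

namespace SNA

theorem le_countP_lt_iff_lt_getElem {α : Type*} [LinearOrder α] {l : List α}
    (hl : l.Pairwise (· ≤ ·)) {k' : ℕ} (h0 : 0 < k') (hk : k' ≤ l.length) (v : α) :
    k' ≤ l.countP (v < ·) ↔ v < l[l.length - k'] := by
  set i := l.length - k'
  have hi : i < l.length := by omega
  have hsplit : l = l.take i ++ l[i] :: l.drop (i + 1) := by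
    rw [← List.drop_eq_getElem_cons hi, List.take_append_drop]
  have hpair := hsplit ▸ hl
  simp only [List.pairwise_append, List.pairwise_cons, List.mem_cons] at hpair
  have hcount : l.countP (v < ·) = (l.take i).countP (v < ·) + (if v < l[i] then 1 else 0)
      + (l.drop (i + 1)).countP (v < ·) := by
    conv_lhs => rw [hsplit, List.countP_append, List.countP_cons]
    simp only [decide_eq_true_eq]
    omega
  have hlen : (l.drop (i + 1)).length = k' - 1 := by simp; omega
  constructor
  · intro hcount_ge
    by_contra hle
    push Not at hle
    have htake : (l.take i).countP (v < ·) = 0 :=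
      List.countP_eq_zero.2 fun a ha => by
        simpa using (hpair.2.2 a ha l[i] (Or.inl rfl)).trans hle
    have := (l.drop (i + 1)).countP_le_length (p := (v < ·))
    rw [hcount, htake, if_neg hle.not_gt] at hcount_ge
    omega
  · intro hlt
    have hdrop : (l.drop (i + 1)).countP (v < ·) = k' - 1 := by
      rw [← hlen, List.countP_eq_length]
      intro b hb
      simpa using hlt.trans_le (hpair.2.1.1 b hb)
    rw [hcount, if_pos hlt, hdrop]
    omega

theorem coe_lt_kthHighest_iff (s : Multiset ℝ≥0) (k' : ℕ) (v : ℝ≥0) :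
    (v : ℝ≥0∞) < kthHighest s k' ↔ k' ≤ s.countP (v < ·) := by
  unfold kthHighest
  split_ifs with h0 hcard
  · simp [h0]
  · simpa using hcard.trans_le' (s.countP_le_card _)
  · push Not at hcard
    have hs : s.countP (v < ·) = (s.sort (· ≤ ·)).countP (v < ·) := by
      conv_lhs => rw [← s.sort_eq (· ≤ ·)]
      rfl
    rw [ENNReal.coe_lt_coe, hs, le_countP_lt_iff_lt_getElem (s.pairwise_sort _)
      (Nat.pos_of_ne_zero h0) (by simpa using hcard), List.getD_eq_getElem _ _ (by simp; omega)]
    simp only [Multiset.length_sort]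

variable {N : Type*} [Fintype N]

section Priority

variable [LinearOrder N] (θ : Profile N) (rs : Finset N)

lemma prioList_nodup : (prioList θ rs).Nodup :=
  (List.mergeSort_perm _ _).nodup_iff.2 (Finset.sort_nodup _ _)

variable {θ rs}

lemma mem_prioList {i : N} : i ∈ prioList θ rs ↔ Connected θ rs i := by
  simp [prioList, Nhat]

end Priority

variable [DecidableEq N]

section Run

variable (θ : Profile N) (rs : Finset N) (extra : Multiset ℝ≥0)

noncomputable def price (s : Finset N × ℕ) (i : N) : ℝ≥0∞ :=
  kthHighest (((NhatMinus θ rs i \ s.1).val.map fun j => (θ j).1) + extra) s.2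

/-- The transition of the state `(W, k')` (winners so far, units left) that `runAux` threads
through the priority list. -/
noncomputable def step (s : Finset N × ℕ) (i : N) : Finset N × ℕ :=
  if price θ rs extra s i ≤ (θ i).1 then (insert i s.1, s.2 - 1) else s

variable {θ rs extra}

lemma units_pos_of_price_le {s : Finset N × ℕ} {i : N} (h : price θ rs extra s i ≤ (θ i).1) :
    0 < s.2 := by
  by_contra hs
  have hlt : ((θ i).1 : ℝ≥0∞) < price θ rs extra s i :=
    (coe_lt_kthHighest_iff _ _ _).2 (by omega)
  exact (h.trans_lt hlt).false

lemma mem_step_fst_of_ne {s : Finset N × ℕ} {i j : N} (hji : j ≠ i) :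
    j ∈ (step θ rs extra s i).1 ↔ j ∈ s.1 := by
  unfold step
  split_ifs <;> simp [hji]

variable (θ rs extra)

lemma subset_foldl_step : ∀ (L : List N) (s : Finset N × ℕ),
    s.1 ⊆ (L.foldl (step θ rs extra) s).1
  | [], _ => subset_rfl
  | i :: L, s => by
    refine subset_trans ?_ (subset_foldl_step L _)
    unfold step
    split_ifs
    exacts [Finset.subset_insert i s.1, subset_rfl]

lemma foldl_step_subset : ∀ (L : List N) (s : Finset N × ℕ),
    (L.foldl (step θ rs extra) s).1 ⊆ s.1 ∪ L.toFinset
  | [], s => by simp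
  | i :: L, s => by
    refine (foldl_step_subset L _).trans ?_
    unfold step
    split_ifs <;> intro j <;> simp +contextual [or_comm]

lemma card_foldl_step_add : ∀ (L : List N) (s : Finset N × ℕ), L.Nodup → (∀ j ∈ L, j ∉ s.1) →
    (L.foldl (step θ rs extra) s).1.card + (L.foldl (step θ rs extra) s).2 = s.1.card + s.2
  | [], _, _, _ => rfl
  | i :: L, s, hnd, hdisj => by
    rw [List.nodup_cons] at hnd
    rw [List.foldl_cons, card_foldl_step_add L _ hnd.2]
    · unfold step
      split_ifs with h
      · have := units_pos_of_price_le h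
        rw [Finset.card_insert_of_notMem (hdisj i List.mem_cons_self)]
        omega
      · rfl
    · intro j hj
      rw [mem_step_fst_of_ne (ne_of_mem_of_not_mem hj hnd.1)]
      exact hdisj j (List.mem_cons_of_mem _ hj)

lemma runAux_cons_fst (i : N) (L : List N) (W : Finset N) (k' : ℕ) :
    (runAux θ rs extra (i :: L) W k').1 =
      Function.update (runAux θ rs extra L (step θ rs extra (W, k') i).1
        (step θ rs extra (W, k') i).2).1 i
        (if price θ rs extra (W, k') i ≤ (θ i).1 then 1 else 0) := by
  rw [runAux]
  unfold step price
  dsimp only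
  split_ifs <;> rfl

lemma runAux_fst_eq : ∀ (L : List N) (W : Finset N) (k' : ℕ), L.Nodup → (∀ j ∈ L, j ∉ W) →
    ∀ i, (runAux θ rs extra L W k').1 i =
      if i ∈ (L.foldl (step θ rs extra) (W, k')).1 \ W then 1 else 0
  | [], W, k', _, _, i => by simp [runAux]
  | h :: L, W, k', hnd, hdisj, i => by
    rw [List.nodup_cons] at hnd
    have hhW : h ∉ W := hdisj h List.mem_cons_self
    have hdisj' : ∀ j ∈ L, j ∉ (step θ rs extra (W, k') h).1 := fun j hj => by
      rw [mem_step_fst_of_ne (ne_of_mem_of_not_mem hj hnd.1)]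
      exact hdisj j (List.mem_cons_of_mem _ hj)
    rw [runAux_cons_fst, List.foldl_cons]
    obtain rfl | hih := eq_or_ne i h
    · rw [Function.update_self]
      refine if_congr ⟨fun hwin => Finset.mem_sdiff.2 ⟨?_, hhW⟩, fun hmem => ?_⟩ rfl rfl
      · refine subset_foldl_step θ rs extra L _ ?_
        simp [step, hwin]
      · by_contra hlose
        have := foldl_step_subset θ rs extra L _ (Finset.mem_sdiff.1 hmem).1
        simp [step, hlose, hhW, hnd.1] at this
    · rw [Function.update_of_ne hih, runAux_fst_eq L _ _ hnd.2 hdisj' i]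
      simp only [Finset.mem_sdiff, mem_step_fst_of_ne hih]

end Run

section Reserve

variable {θ : Profile N} {rs : Finset N} {k : ℕ} {vh : ℝ≥0}

lemma reserve_le_of_price_le {s : Finset N × ℕ} {i : N} (hs : s.2 ≤ k)
    (h : price θ rs (Multiset.replicate k vh) s i ≤ (θ i).1) : vh ≤ (θ i).1 := by
  by_contra! hlt
  refine (h.trans_lt ((coe_lt_kthHighest_iff _ _ _).2 ?_)).false
  have hdummies : (Multiset.replicate k vh).countP ((θ i).1 < ·) = k := by
    rw [Multiset.countP_eq_card.2 fun a ha => Multiset.eq_of_mem_replicate ha ▸ hlt,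
      Multiset.card_replicate]
  rw [Multiset.countP_add, hdummies]
  omega

lemma reserve_le_of_mem_foldl_step : ∀ (L : List N) (s : Finset N × ℕ), s.2 ≤ k →
    (∀ j ∈ s.1, vh ≤ (θ j).1) →
    ∀ j ∈ (L.foldl (step θ rs (Multiset.replicate k vh)) s).1, vh ≤ (θ j).1
  | [], _, _, h => h
  | i :: L, s, hs, h => by
    rw [List.foldl_cons]
    unfold step
    split_ifs with hwin
    · refine reserve_le_of_mem_foldl_step L _ ((Nat.sub_le _ _).trans hs) ?_
      rw [Finset.forall_mem_insert]
      exact ⟨reserve_le_of_price_le hs hwin, h⟩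
    · exact reserve_le_of_mem_foldl_step L s hs h

lemma le_card_filter_of_lt_price {s : Finset N × ℕ} {i : N} (hvh : vh ≤ (θ i).1)
    (h : ((θ i).1 : ℝ≥0∞) < price θ rs (Multiset.replicate k vh) s i) :
    s.2 ≤ ((NhatMinus θ rs i \ s.1).filter fun j => (θ i).1 < (θ j).1).card := by
  have hcount := (coe_lt_kthHighest_iff _ _ _).1 h
  rwa [Multiset.countP_add, Multiset.countP_map,
    Multiset.countP_eq_zero.2 fun a ha => (Multiset.eq_of_mem_replicate ha ▸ hvh).not_gt,
    add_zero] at hcount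

end Reserve

section DistanceBased

variable [LinearOrder N] (k : ℕ) (vh : ℝ≥0) (θ : Profile N) (rs : Finset N)

noncomputable def DBMresState : Finset N × ℕ :=
  (prioList θ rs).foldl (step θ rs (Multiset.replicate k vh)) (∅, k)

lemma DBMres_fst_eq (i : N) :
    (DBMres k vh θ rs).1 i = if i ∈ (DBMresState k vh θ rs).1 then 1 else 0 := by
  rw [DBMres, runAux_fst_eq _ _ _ _ _ _ (prioList_nodup θ rs) (by simp)]
  simp only [Finset.sdiff_empty]
  rfl

lemma card_DBMresState : (DBMresState k vh θ rs).1.card + (DBMresState k vh θ rs).2 = k := by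
  have h := card_foldl_step_add θ rs (Multiset.replicate k vh) _ (∅, k)
    (prioList_nodup θ rs) (by simp)
  rwa [Finset.card_empty, zero_add] at h

variable {k vh θ rs}

lemma reserve_le_of_mem_DBMresState {i : N} (hi : i ∈ (DBMresState k vh θ rs).1) :
    vh ≤ (θ i).1 :=
  reserve_le_of_mem_foldl_step (prioList θ rs) (∅, k) le_rfl (by simp) i hi

lemma card_DBMresState_eq_of_notMem {j : N} (hc : Connected θ rs j) (hv : vh < (θ j).1)
    (hj : j ∉ (DBMresState k vh θ rs).1) : (DBMresState k vh θ rs).1.card = k := by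
  have hF := card_DBMresState k vh θ rs
  set F := (DBMresState k vh θ rs).1 with hFdef
  obtain ⟨i, hiLo, hmax⟩ := Finset.exists_max_image
    (Finset.univ.filter fun j => Connected θ rs j ∧ vh < (θ j).1 ∧ j ∉ F) (fun j => (θ j).1)
    ⟨j, by simp [hc, hv, hj]⟩
  simp only [Finset.mem_filter, Finset.mem_univ, true_and] at hiLo hmax
  obtain ⟨hci, hvi, hiF⟩ := hiLo
  obtain ⟨L₁, L₂, hsplit⟩ := List.append_of_mem (mem_prioList.2 hci)
  have hmid := card_foldl_step_add θ rs (Multiset.replicate k vh) L₁ (∅, k)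
    (hsplit ▸ prioList_nodup θ rs).of_append_left (by simp)
  set mid := L₁.foldl (step θ rs (Multiset.replicate k vh)) (∅, k)
  have hfinal : F = ((i :: L₂).foldl (step θ rs (Multiset.replicate k vh)) mid).1 := by
    rw [hFdef, DBMresState, hsplit, List.foldl_append]
  have hmidF : mid.1 ⊆ F := hfinal ▸ subset_foldl_step θ rs _ (i :: L₂) mid
  have hlose : ((θ i).1 : ℝ≥0∞) < price θ rs (Multiset.replicate k vh) mid i := by
    by_contra! hwin
    refine hiF (hfinal ▸ subset_foldl_step θ rs _ L₂ _ ?_)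
    simp [step, hwin]
  have houtbid := le_card_filter_of_lt_price hvi.le hlose
  have hwinners : ((NhatMinus θ rs i \ mid.1).filter fun j => (θ i).1 < (θ j).1) ⊆ F \ mid.1 := by
    intro j hj
    simp only [Finset.mem_filter, Finset.mem_sdiff, NhatMinus, Nhat, Finset.mem_univ,
      true_and] at hj
    obtain ⟨⟨⟨hcj, -⟩, hjmid⟩, hij⟩ := hj
    refine Finset.mem_sdiff.2 ⟨?_, hjmid⟩
    by_contra hjF
    exact (hmax j ⟨hcj, hvi.trans hij, hjF⟩).not_gt hij
  have hlate := Finset.card_le_card hwinners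
  have hsplit_card := Finset.card_sdiff_add_card_eq_card hmidF
  simp only [Finset.card_empty] at hmid
  omega

theorem DBMres_welfare_loss_le {vbar : ℝ≥0} (x : N → ℕ) (hv : ∀ i, (θ i).1 ≤ vbar)
    (hx1 : ∀ i, x i ≤ 1) (hxk : ∑ i, x i ≤ k) (hxc : ∀ i, x i = 1 → Connected θ rs i) :
    ∑ i, ((θ i).1 : ℝ) * (x i : ℝ) - ∑ i, ((θ i).1 : ℝ) * ((DBMres k vh θ rs).1 i : ℝ) ≤
      k * max ((vbar : ℝ) - vh) vh := by
  set F := (DBMresState k vh θ rs).1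
  have hf : ∀ i, ((DBMres k vh θ rs).1 i : ℝ) = if i ∈ F then 1 else 0 := fun i => by
    rw [DBMres_fst_eq]; split_ifs <;> simp
  have hxk' : ∑ i, (x i : ℝ) ≤ k := by exact_mod_cast hxk
  by_cases hsold : F.card = k
  · have hopt : ∑ i, ((θ i).1 : ℝ) * (x i : ℝ) ≤ k * vbar := calc
      ∑ i, ((θ i).1 : ℝ) * (x i : ℝ) ≤ ∑ i, (vbar : ℝ) * (x i : ℝ) := by
        gcongr with i; exact hv i
      _ = vbar * ∑ i, (x i : ℝ) := by rw [Finset.mul_sum]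
      _ ≤ k * vbar := by rw [mul_comm]; gcongr
    have hmech : (k : ℝ) * vh ≤ ∑ i, ((θ i).1 : ℝ) * ((DBMres k vh θ rs).1 i : ℝ) := by
      simp only [hf, mul_ite, mul_one, mul_zero, Finset.sum_ite_mem, Finset.univ_inter]
      rw [← hsold, ← nsmul_eq_mul]
      exact Finset.card_nsmul_le_sum _ _ _ fun i hi => by
        exact_mod_cast reserve_le_of_mem_DBMresState hi
    nlinarith [le_max_left ((vbar : ℝ) - vh) vh]
  · have hpoint : ∀ i, ((θ i).1 : ℝ) * (x i : ℝ) - ((θ i).1 : ℝ) * ((DBMres k vh θ rs).1 i : ℝ)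
        ≤ vh * (x i : ℝ) := fun i => by
      rw [hf]
      rcases Nat.le_one_iff_eq_zero_or_eq_one.1 (hx1 i) with hx | hx
      · split_ifs <;> simp [hx]
      · split_ifs with hiF
        · simp [hx]
        · have : (θ i).1 ≤ vh := not_lt.1 fun hlt =>
            hsold (card_DBMresState_eq_of_notMem (hxc i hx) hlt hiF)
          simpa [hx] using this
    calc _ = ∑ i, (((θ i).1 : ℝ) * (x i : ℝ) - ((θ i).1 : ℝ) * ((DBMres k vh θ rs).1 i : ℝ)) :=
          (Finset.sum_sub_distrib ..).symm
      _ ≤ ∑ i, (vh : ℝ) * (x i : ℝ) := Finset.sum_le_sum fun i _ => hpoint i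
      _ = vh * ∑ i, (x i : ℝ) := by rw [Finset.mul_sum]
      _ ≤ k * max ((vbar : ℝ) - vh) vh := by
        rw [mul_comm]
        gcongr
        exact le_max_right _ _

lemma DBMres_fst_eq_zero_of_lt_reserve {i : N} (h : (θ i).1 < vh) :
    (DBMres k vh θ rs).1 i = 0 := by
  rw [DBMres_fst_eq, if_neg fun hi => (reserve_le_of_mem_DBMresState hi).not_gt h]

end DistanceBased

theorem exists_DBMres_loss_gt {vbar : ℝ≥0} (hpos : 0 < vbar) {ε : ℝ} (hε : 0 < ε) :
    ∃ (n k : ℕ) (θ : Profile (Fin n)) (rs : Finset (Fin n)) (x : Fin n → ℕ),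
      0 < k ∧ (∀ i, (θ i).1 ≤ vbar) ∧
      (∀ i, x i ≤ 1) ∧ (∑ i, x i) ≤ k ∧ (∀ i, x i = 1 → Connected θ rs i) ∧
      (1 / 2 - ε) * (k : ℝ) * (vbar : ℝ) <
        ∑ i, ((θ i).1 : ℝ) * (x i : ℝ) -
          ∑ i, ((θ i).1 : ℝ) * ((DBMres k (vbar / 2) θ rs).1 i : ℝ) := by
  have hvbar : (0 : ℝ) < vbar := hpos
  set v := Real.toNNReal ((1 - ε) * vbar / 2)
  have hv : v < vbar / 2 := by
    rw [← NNReal.coe_lt_coe, Real.coe_toNNReal', NNReal.coe_div, NNReal.coe_ofNat]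
    exact max_lt (by nlinarith) (by positivity)
  set θ : Profile (Fin 1) := fun _ => (v, ∅)
  have hlose : (DBMres 1 (vbar / 2) θ Finset.univ).1 0 = 0 := DBMres_fst_eq_zero_of_lt_reserve hv
  refine ⟨1, 1, θ, Finset.univ, fun _ => 1, one_pos,
    fun _ => hv.le.trans (NNReal.half_le_self vbar), fun _ => le_rfl, by simp,
    fun i _ => ⟨0, Finset.mem_univ i⟩, ?_⟩
  simp only [Fin.sum_univ_one, hlose]
  nlinarith [Real.le_coe_toNNReal ((1 - ε) * vbar / 2)]

lemma half_le_max_sub (a b : ℝ) : b / 2 ≤ max a (b - a) := by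
  linarith [le_max_left a (b - a), le_max_right a (b - a)]

/-- **Theorem 4.** If every buyer's value is at most `vbar`, the
distance-based mechanism with reserve price `vh = vbar/2` is `1/2`-inefficient:
(i) for every type profile and every feasible allocation `x`, the efficiency loss
`Σ_i v_i·x_i − Σ_i v_i·f_i(θ)` is at most `k·vbar/2`;
(ii) the bound is tight in the worst case: for every `ε > 0` there is an instance whose
normalized efficiency loss exceeds `(1/2 − ε)·k·vbar`;
(iii) `vh = vbar/2` minimizes the worst-case efficiency loss
`max (k·vh) (k·(vbar − vh))` over reserve prices `vh`. -/
theorem distanceBased_reserve_halfInefficient (vbar : ℝ≥0) :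
    (∀ (M : Type) [Fintype M] [DecidableEq M] [LinearOrder M] (k : ℕ) (θ : Profile M)
        (rs : Finset M) (x : M → ℕ),
      (∀ i, (θ i).1 ≤ vbar) →
      (∀ i, x i ≤ 1) → (∑ i, x i) ≤ k → (∀ i, x i = 1 → Connected θ rs i) →
      ∑ i, ((θ i).1 : ℝ) * (x i : ℝ) -
          ∑ i, ((θ i).1 : ℝ) * ((DBMres k (vbar / 2) θ rs).1 i : ℝ) ≤
        (k : ℝ) * (vbar : ℝ) / 2) ∧
    (0 < vbar → ∀ ε : ℝ, 0 < ε →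
      ∃ (n k : ℕ) (θ : Profile (Fin n)) (rs : Finset (Fin n)) (x : Fin n → ℕ),
        0 < k ∧ (∀ i, (θ i).1 ≤ vbar) ∧
        (∀ i, x i ≤ 1) ∧ (∑ i, x i) ≤ k ∧ (∀ i, x i = 1 → Connected θ rs i) ∧
        (1 / 2 - ε) * (k : ℝ) * (vbar : ℝ) <
          ∑ i, ((θ i).1 : ℝ) * (x i : ℝ) -
            ∑ i, ((θ i).1 : ℝ) * ((DBMres k (vbar / 2) θ rs).1 i : ℝ)) ∧
    (∀ (k : ℕ) (vh : ℝ), 0 ≤ vh → vh ≤ (vbar : ℝ) →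
      (k : ℝ) * (vbar : ℝ) / 2 ≤ max ((k : ℝ) * vh) ((k : ℝ) * ((vbar : ℝ) - vh))) := by
  refine ⟨fun M _ _ _ k θ rs x hv hx1 hxk hxc => ?_,
    fun hpos ε hε => exists_DBMres_loss_gt hpos hε, fun k vh _ _ => ?_⟩
  · have hloss := DBMres_welfare_loss_le (vh := vbar / 2) x hv hx1 hxk hxc
    rwa [NNReal.coe_div, NNReal.coe_ofNat, sub_half, max_self, ← mul_div_assoc] at hloss
  · rw [← mul_max_of_nonneg _ _ k.cast_nonneg, mul_div_assoc]
    gcongr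
    exact half_le_max_sub vh vbar

end SNA
end

section
/- For every k ≥ 2, in the distance-based mechanism with k units, reporting (v_i, ∅) (the true value while hiding all followers) is not a dominant strategy: there exist a buyer i with true type θ_i = (v_i, r_i) and a profile θ'_{-i} of reports of the other buyers such that the utility from the truthful report θ_i strictly exceeds the utility from the report (v_i, ∅). (A concrete witness: k+2 buyers with r_s = {i_1, i_3, i_5, …, i_{k+2}}, θ_{i_1} = (15, {i_2}), θ_{i_2} = (20, ∅), θ_{i_3} = (10, {i_4}), θ_{i_4} = (9, ∅), θ_{i_j} = (30, ∅) for 5 ≤ j ≤ k+2, priority i_5 ≻ ⋯ ≻ i_{k+2} ≻ i_3 ≻ i_1 ≻ i_4 ≻ i_2; forwarding to i_2 lets i_1 win at price 9, hiding makes her pay 10.) -/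
open scoped Classical NNReal ENNReal

/-!
The witness has `k + 1` buyers: `k - 2` fillers, then `rival` (value 0) and `agent` (value 1),
all direct buyers of the seller, and `follower` (value 1), whom both `rival` and `agent` invite.
All values are at most 1, so the fillers, who come first, take `k - 2` units and leave two.
Truthfully `follower` has two entry points, so every descendant set is a singleton: `rival`
faces `v*({agent, follower}, 2) = 1` and loses, and `agent` then wins at
`v*({rival, follower}, 2) = 0`. If `agent` hides `follower`, `rival` becomes its critical parent,
so `follower` leaves the pool of `rival`, who wins at price 0 against `{agent}`; one unit is left,
for which `agent` pays `v*({follower}, 1) = 1`, her whole value.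
-/

namespace SNA

open Function

section Prices

variable {N : Type*} {θ : Profile N} {S : Finset N} {k' : ℕ}

theorem vstar_eq_zero_of_card_lt (hk : k' ≠ 0) (h : S.card < k') : vstar θ S k' = 0 := by
  simp [vstar, kthHighest, hk, h]

theorem vstar_le_of_forall_le {c : ℝ≥0} (hk : k' ≠ 0) (h : ∀ j ∈ S, (θ j).1 ≤ c) :
    vstar θ S k' ≤ c := by
  unfold vstar kthHighest
  rw [if_neg hk]
  split_ifs with hcard
  · exact zero_le
  · set l := (S.val.map fun j => (θ j).1).sort (· ≤ ·)
    have hlen : Multiset.card (S.val.map fun j => (θ j).1) - k' < l.length := by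
      rw [Multiset.length_sort]; omega
    rw [List.getD_eq_getElem _ _ hlen, ENNReal.coe_le_coe]
    obtain ⟨j, hj, hjl⟩ := Multiset.mem_map.1 ((Multiset.mem_sort _).1 (List.getElem_mem hlen))
    exact hjl ▸ h j hj

theorem vstar_eq_of_card_eq {i : N} (h : S.card = k') (hi : i ∈ S)
    (hmin : ∀ j ∈ S, (θ i).1 ≤ (θ j).1) : vstar θ S k' = (θ i).1 := by
  have hk : k' ≠ 0 := by rintro rfl; simp_all
  unfold vstar kthHighest
  set s := S.val.map fun j => (θ j).1
  have hcard : Multiset.card s = k' := by simpa [s] using h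
  set l := s.sort (· ≤ ·)
  have hlen : 0 < l.length := by rw [Multiset.length_sort]; omega
  rw [if_neg hk, if_neg (by omega), hcard, Nat.sub_self, List.getD_eq_getElem _ _ hlen,
    ENNReal.coe_inj]
  have hmem : ∀ x, x ∈ l ↔ ∃ j ∈ S, (θ j).1 = x := fun x => by
    simp [l, s, Multiset.mem_sort]
  refine le_antisymm ?_ ?_
  · obtain ⟨m, hm, hml⟩ := List.getElem_of_mem ((hmem _).2 ⟨i, hi, rfl⟩)
    rcases Nat.eq_zero_or_pos m with rfl | hpos
    · exact hml.le
    · exact hml ▸ List.pairwise_iff_getElem.1 (Multiset.pairwise_sort s _) 0 m hlen hm hpos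
  · obtain ⟨j, hj, hjl⟩ := (hmem _).1 (List.getElem_mem hlen)
    exact hjl ▸ hmin j hj

end Prices

section Network

variable {N : Type*} {θ : Profile N} {rs : Finset N} {i j p : N}

theorem connected_of_mem (h : i ∈ rs) : Connected θ rs i := ⟨0, h⟩

theorem Connected.of_mem_followers (hj : Connected θ rs j) (hi : i ∈ (θ j).2) :
    Connected θ rs i :=
  let ⟨m, hm⟩ := hj; ⟨m + 1, j, hm, hi⟩

theorem dNet_eq_one_of_mem (h : i ∈ rs) : dNet θ rs i = 1 :=
  le_antisymm (sInf_le ⟨0, h, by simp⟩) (le_sInf fun _ ⟨_, _, hn⟩ => hn ▸ le_add_self)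

theorem dNet_eq_two (hi : i ∉ rs) (hj : j ∈ rs) (hji : i ∈ (θ j).2) : dNet θ rs i = 2 := by
  refine le_antisymm (sInf_le ⟨1, ⟨j, hj, hji⟩, by norm_num⟩) (le_sInf ?_)
  rintro _ ⟨_ | m, hm, rfl⟩
  · exact absurd hm hi
  · norm_cast
    omega

theorem ne_of_reachInAvoid {m : ℕ} (h : reachInAvoid θ rs j m i) : i ≠ j := by
  cases m with
  | zero => exact h.2
  | succ m => exact h.choose_spec.2.2

theorem not_criticalParent_of_mem (hi : i ∈ rs) : ¬ CriticalParent θ rs j i :=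
  fun h => h.2.2.2 ⟨0, hi, h.2.2.1.symm⟩

theorem not_criticalParent_of_mem_followers (hp : p ∈ rs) (hpj : p ≠ j) (hi : i ∈ (θ p).2) :
    ¬ CriticalParent θ rs j i :=
  fun h => h.2.2.2 ⟨1, p, ⟨hp, hpj⟩, hi, h.2.2.1.symm⟩

theorem criticalParent_of_forall_mem_followers (hi : Connected θ rs i) (hj : Connected θ rs j)
    (hne : j ≠ i) (hirs : i ∉ rs) (h : ∀ p, i ∈ (θ p).2 → p = j) :
    CriticalParent θ rs j i := by
  refine ⟨hi, hj, hne, ?_⟩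
  rintro ⟨_ | m, hm⟩
  · exact hirs hm.1
  · obtain ⟨p, hp, hip, -⟩ := hm
    exact ne_of_reachInAvoid hp (h p hip)

theorem desc_eq_singleton [Fintype N] [DecidableEq N] (hi : Connected θ rs i)
    (h : ∀ j, ¬ CriticalParent θ rs i j) : desc θ rs i = {i} := by
  ext j
  simp only [desc, Finset.mem_filter, Finset.mem_univ, true_and, Finset.mem_singleton]
  refine ⟨fun ⟨_, hj⟩ => hj.resolve_right (h j), ?_⟩
  rintro rfl
  exact ⟨hi, Or.inl rfl⟩

theorem prioList_eq_sort [Fintype N] [LinearOrder N] (h : Monotone (dNet θ rs)) :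
    prioList θ rs = (Nhat θ rs).sort (· ≤ ·) :=
  List.mergeSort_of_pairwise <| (Finset.pairwise_sort _ _).imp fun hij => by
    simpa using h hij

end Network

section Run

variable {N : Type*} [Fintype N] [DecidableEq N] {θ : Profile N} {rs : Finset N}
  {W : Finset N} {k' : ℕ} {i : N} {l : List N}

theorem runAux_cons_of_vstar_le (h : vstar θ (NhatMinus θ rs i \ W) k' ≤ (θ i).1) :
    runAux θ rs 0 (i :: l) W k' =
      (update (runAux θ rs 0 l (insert i W) (k' - 1)).1 i 1,
       update (runAux θ rs 0 l (insert i W) (k' - 1)).2 i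
         (vstar θ (NhatMinus θ rs i \ W) k').toNNReal) := by
  simp only [runAux, add_zero]
  exact if_pos h

theorem runAux_cons_of_lt_vstar (h : (θ i).1 < vstar θ (NhatMinus θ rs i \ W) k') :
    runAux θ rs 0 (i :: l) W k' =
      (update (runAux θ rs 0 l W k').1 i 0, update (runAux θ rs 0 l W k').2 i 0) := by
  simp only [runAux, add_zero]
  exact if_neg (not_le.2 h)

theorem runAux_append_apply_of_forall_le {rest : List N} (hl : l.length ≤ k')
    (hmax : ∀ i ∈ l, ∀ j, (θ j).1 ≤ (θ i).1) {x : N} (hx : x ∉ l) :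
    ((runAux θ rs 0 (l ++ rest) W k').1 x, (runAux θ rs 0 (l ++ rest) W k').2 x) =
      ((runAux θ rs 0 rest (W ∪ l.toFinset) (k' - l.length)).1 x,
       (runAux θ rs 0 rest (W ∪ l.toFinset) (k' - l.length)).2 x) := by
  induction l generalizing W k' with
  | nil => simp
  | cons i l ih =>
    obtain ⟨hxi, hxl⟩ := not_or.1 (List.mem_cons.not.1 hx)
    have hwin : vstar θ (NhatMinus θ rs i \ W) k' ≤ (θ i).1 :=
      vstar_le_of_forall_le (by simp at hl; omega) fun j _ => hmax i (by simp) j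
    rw [List.cons_append, runAux_cons_of_vstar_le hwin]
    simp only [update_of_ne hxi]
    rw [ih (by simp at hl; omega) (fun i hi => hmax i (by simp [hi])) hxl]
    simp [Finset.insert_union, Nat.sub_sub, Nat.add_comm]

end Run

section Witness

variable {k : ℕ} {θ : Profile (Fin (k + 1))}

def rival (k : ℕ) : Fin (k + 1) := ⟨k - 2, by omega⟩

def agent (k : ℕ) : Fin (k + 1) := ⟨k - 1, by omega⟩

def follower (k : ℕ) : Fin (k + 1) := Fin.last k

def directBuyers (k : ℕ) : Finset (Fin (k + 1)) := Finset.univ.erase (follower k)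

def fillers (k : ℕ) : List (Fin (k + 1)) := (List.finRange (k + 1)).take (k - 2)

noncomputable def truthfulProfile (k : ℕ) : Profile (Fin (k + 1)) := fun j =>
  if j = rival k then (0, {follower k}) else if j = agent k then (1, {follower k}) else (1, ∅)

noncomputable def hidingProfile (k : ℕ) : Profile (Fin (k + 1)) :=
  update (truthfulProfile k) (agent k) (1, ∅)

theorem rival_ne_agent (hk : 2 ≤ k) : rival k ≠ agent k := by
  simp [rival, agent, Fin.ext_iff]; omega

theorem rival_ne_follower (hk : 2 ≤ k) : rival k ≠ follower k := by
  simp [rival, follower, Fin.ext_iff]; omega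

theorem agent_ne_follower (hk : 2 ≤ k) : agent k ≠ follower k := by
  simp [agent, follower, Fin.ext_iff]; omega

theorem mem_directBuyers {j : Fin (k + 1)} : j ∈ directBuyers k ↔ j ≠ follower k := by
  simp [directBuyers]

theorem mem_fillers {j : Fin (k + 1)} : j ∈ fillers k ↔ (j : ℕ) < k - 2 := by
  simp [fillers, List.mem_take_iff_getElem, Fin.ext_iff]
  omega

theorem finRange_eq_fillers_append (hk : 2 ≤ k) :
    List.finRange (k + 1) = fillers k ++ [rival k, agent k, follower k] := by
  refine (List.take_append_drop (k - 2) _).symm.trans (congrArg _ ?_)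
  refine List.ext_getElem (by simp; omega) fun m h _ => ?_
  have hm : m < 3 := by simp at h; omega
  rw [List.getElem_drop, List.getElem_finRange]
  interval_cases m <;> simp [rival, agent, follower, Fin.ext_iff] <;> omega

theorem truthfulProfile_rival : truthfulProfile k (rival k) = (0, {follower k}) := by
  simp [truthfulProfile]

theorem truthfulProfile_agent (hk : 2 ≤ k) : truthfulProfile k (agent k) = (1, {follower k}) := by
  simp [truthfulProfile, (rival_ne_agent hk).symm]

theorem truthfulProfile_fst_le_one (j : Fin (k + 1)) : (truthfulProfile k j).1 ≤ 1 := by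
  unfold truthfulProfile; split_ifs <;> simp

theorem truthfulProfile_fst_of_ne {j : Fin (k + 1)} (hj : j ≠ rival k) :
    (truthfulProfile k j).1 = 1 := by
  unfold truthfulProfile; split_ifs <;> simp_all

theorem hidingProfile_fst (hk : 2 ≤ k) (j : Fin (k + 1)) :
    (hidingProfile k j).1 = (truthfulProfile k j).1 := by
  rcases eq_or_ne j (agent k) with rfl | hj
  · simp [hidingProfile, truthfulProfile_agent hk]
  · simp [hidingProfile, hj]

theorem hidingProfile_rival (hk : 2 ≤ k) : hidingProfile k (rival k) = (0, {follower k}) := by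
  simp [hidingProfile, rival_ne_agent hk, truthfulProfile_rival]

theorem eq_rival_of_mem_hidingProfile_followers {j x : Fin (k + 1)}
    (h : x ∈ (hidingProfile k j).2) : j = rival k := by
  unfold hidingProfile truthfulProfile at h
  rcases eq_or_ne j (agent k) with rfl | hj
  · simp at h
  · simp only [update_of_ne hj] at h
    split_ifs at h <;> simp_all

theorem connected_directBuyers (hk : 2 ≤ k) (hθ : follower k ∈ (θ (rival k)).2)
    (j : Fin (k + 1)) :
    Connected θ (directBuyers k) j := by
  rcases eq_or_ne j (follower k) with rfl | hj
  · exact (connected_of_mem (mem_directBuyers.2 (rival_ne_follower hk))).of_mem_followers hθ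
  · exact connected_of_mem (mem_directBuyers.2 hj)

theorem dNet_directBuyers (hk : 2 ≤ k) (hθ : follower k ∈ (θ (rival k)).2)
    (j : Fin (k + 1)) :
    dNet θ (directBuyers k) j = if j = follower k then 2 else 1 := by
  split_ifs with hj
  · exact hj ▸ dNet_eq_two (by simp [mem_directBuyers])
      (mem_directBuyers.2 (rival_ne_follower hk)) hθ
  · exact dNet_eq_one_of_mem (mem_directBuyers.2 hj)

theorem Nhat_directBuyers (hk : 2 ≤ k) (hθ : follower k ∈ (θ (rival k)).2) :
    Nhat θ (directBuyers k) = Finset.univ := by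
  simpa [Nhat, Finset.eq_univ_iff_forall] using connected_directBuyers hk hθ

theorem prioList_directBuyers (hk : 2 ≤ k) (hθ : follower k ∈ (θ (rival k)).2) :
    prioList θ (directBuyers k) = List.finRange (k + 1) := by
  have hmono : Monotone (dNet θ (directBuyers k)) := fun i j hij => by
    rw [dNet_directBuyers hk hθ, dNet_directBuyers hk hθ]
    by_cases hi : i = follower k
    · have hj : j = follower k := Fin.last_le_iff.1 (by rwa [hi] at hij)
      simp [hi, hj]
    · split_ifs <;> norm_num
  rw [prioList_eq_sort hmono, Nhat_directBuyers hk hθ, Fin.sort_univ]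

theorem DBM_agent_eq_runAux_after_fillers (hk : 2 ≤ k)
    (hθ : follower k ∈ (θ (rival k)).2) (hval : ∀ j, (θ j).1 = (truthfulProfile k j).1) :
    ((DBM k θ (directBuyers k)).1 (agent k), (DBM k θ (directBuyers k)).2 (agent k)) =
      ((runAux θ (directBuyers k) 0 [rival k, agent k, follower k] (fillers k).toFinset 2).1
          (agent k),
        (runAux θ (directBuyers k) 0 [rival k, agent k, follower k] (fillers k).toFinset 2).2
          (agent k)) := by
  have hlen : (fillers k).length = k - 2 := by simp [fillers]; omega
  have hmax : ∀ i ∈ fillers k, ∀ j, (θ j).1 ≤ (θ i).1 := fun i hi j => by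
    have hi' : i ≠ rival k := fun h => by
      have := mem_fillers.1 hi
      simp [h, rival] at this
    rw [hval, hval, truthfulProfile_fst_of_ne hi']
    exact truthfulProfile_fst_le_one j
  have hagent : agent k ∉ fillers k := by simp [mem_fillers, agent]; omega
  unfold DBM
  rw [prioList_directBuyers hk hθ, finRange_eq_fillers_append hk,
    runAux_append_apply_of_forall_le (by omega) hmax hagent, hlen, Finset.empty_union,
    show k - (k - 2) = 2 by omega]

theorem desc_truthfulProfile (hk : 2 ≤ k) (x : Fin (k + 1)) :
    desc (truthfulProfile k) (directBuyers k) x = {x} := by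
  have hrival : follower k ∈ (truthfulProfile k (rival k)).2 := by simp [truthfulProfile_rival]
  have hagent : follower k ∈ (truthfulProfile k (agent k)).2 := by
    simp [truthfulProfile_agent hk]
  refine desc_eq_singleton (connected_directBuyers hk hrival x) fun j => ?_
  rcases eq_or_ne j (follower k) with rfl | hj
  · by_cases hx : x = rival k
    · exact not_criticalParent_of_mem_followers (mem_directBuyers.2 (agent_ne_follower hk))
        (hx ▸ (rival_ne_agent hk).symm) hagent
    · exact not_criticalParent_of_mem_followers (mem_directBuyers.2 (rival_ne_follower hk))
        (Ne.symm hx) hrival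
  · exact not_criticalParent_of_mem (mem_directBuyers.2 hj)

theorem desc_hidingProfile_of_ne (hk : 2 ≤ k) {x : Fin (k + 1)} (hx : x ≠ rival k) :
    desc (hidingProfile k) (directBuyers k) x = {x} := by
  have hrival : follower k ∈ (hidingProfile k (rival k)).2 := by simp [hidingProfile_rival hk]
  refine desc_eq_singleton (connected_directBuyers hk hrival x) fun j => ?_
  rcases eq_or_ne j (follower k) with rfl | hj
  · exact not_criticalParent_of_mem_followers (mem_directBuyers.2 (rival_ne_follower hk))
      (Ne.symm hx) hrival
  · exact not_criticalParent_of_mem (mem_directBuyers.2 hj)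

theorem desc_hidingProfile_rival (hk : 2 ≤ k) :
    desc (hidingProfile k) (directBuyers k) (rival k) = {rival k, follower k} := by
  have hrival : follower k ∈ (hidingProfile k (rival k)).2 := by simp [hidingProfile_rival hk]
  have hcrit : CriticalParent (hidingProfile k) (directBuyers k) (rival k) (follower k) :=
    criticalParent_of_forall_mem_followers (connected_directBuyers hk hrival _)
      (connected_directBuyers hk hrival _) (rival_ne_follower hk) (by simp [mem_directBuyers])
      fun _ hp => eq_rival_of_mem_hidingProfile_followers hp
  ext j
  simp only [desc, Finset.mem_filter, Finset.mem_univ, connected_directBuyers hk hrival j,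
    true_and, Finset.mem_insert, Finset.mem_singleton]
  rcases eq_or_ne j (follower k) with rfl | hj
  · simp [hcrit]
  · simp [hj, not_criticalParent_of_mem (mem_directBuyers.2 hj)]

theorem DBM_truthfulProfile_agent (hk : 2 ≤ k) :
    (DBM k (truthfulProfile k) (directBuyers k)).1 (agent k) = 1 ∧
      (DBM k (truthfulProfile k) (directBuyers k)).2 (agent k) = 0 := by
  set θ := truthfulProfile k
  have hθ : follower k ∈ (θ (rival k)).2 := by simp [θ, truthfulProfile_rival]
  have hpool_rival : NhatMinus θ (directBuyers k) (rival k) \ (fillers k).toFinset =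
      {agent k, follower k} := by
    rw [NhatMinus, Nhat_directBuyers hk hθ, desc_truthfulProfile hk]
    ext j
    simp [mem_fillers, rival, agent, follower, Fin.ext_iff]
    omega
  have hpool_agent : NhatMinus θ (directBuyers k) (agent k) \ (fillers k).toFinset =
      {rival k, follower k} := by
    rw [NhatMinus, Nhat_directBuyers hk hθ, desc_truthfulProfile hk]
    ext j
    simp [mem_fillers, rival, agent, follower, Fin.ext_iff]
    omega
  have hprice_rival : vstar θ {agent k, follower k} 2 = 1 := by
    rw [vstar_eq_of_card_eq (Finset.card_pair (agent_ne_follower hk))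
      (Finset.mem_insert_self _ _) (by simp [θ, truthfulProfile_agent hk,
        truthfulProfile_fst_of_ne (rival_ne_follower hk).symm])]
    simp [θ, truthfulProfile_agent hk]
  have hprice_agent : vstar θ {rival k, follower k} 2 = 0 := by
    rw [vstar_eq_of_card_eq (Finset.card_pair (rival_ne_follower hk))
      (Finset.mem_insert_self _ _) (by simp [θ, truthfulProfile_rival])]
    simp [θ, truthfulProfile_rival]
  have h := DBM_agent_eq_runAux_after_fillers hk hθ (fun _ => rfl)
  rw [runAux_cons_of_lt_vstar
    (by rw [hpool_rival, hprice_rival]; simp [θ, truthfulProfile_rival])] at h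
  simp only [update_of_ne (rival_ne_agent hk).symm] at h
  rw [runAux_cons_of_vstar_le (by rw [hpool_agent, hprice_agent]; exact zero_le)] at h
  simp only [update_self, hpool_agent, hprice_agent, Prod.mk.injEq] at h
  exact ⟨h.1, by simpa using h.2⟩

theorem DBM_hidingProfile_agent (hk : 2 ≤ k) :
    (DBM k (hidingProfile k) (directBuyers k)).1 (agent k) = 1 ∧
      (DBM k (hidingProfile k) (directBuyers k)).2 (agent k) = 1 := by
  set θ := hidingProfile k
  have hθ : follower k ∈ (θ (rival k)).2 := by simp [θ, hidingProfile_rival hk]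
  have hpool_rival : NhatMinus θ (directBuyers k) (rival k) \ (fillers k).toFinset =
      {agent k} := by
    rw [NhatMinus, Nhat_directBuyers hk hθ, desc_hidingProfile_rival hk]
    ext j
    simp [mem_fillers, rival, agent, follower, Fin.ext_iff]
    omega
  have hpool_agent :
      NhatMinus θ (directBuyers k) (agent k) \ insert (rival k) (fillers k).toFinset =
        {follower k} := by
    rw [NhatMinus, Nhat_directBuyers hk hθ, desc_hidingProfile_of_ne hk (rival_ne_agent hk).symm]
    ext j
    simp [mem_fillers, rival, agent, follower, Fin.ext_iff]
    omega
  have hprice_rival : vstar θ {agent k} 2 = 0 :=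
    vstar_eq_zero_of_card_lt (by norm_num) (by simp)
  have hprice_agent : vstar θ {follower k} 1 = 1 := by
    rw [vstar_eq_of_card_eq (Finset.card_singleton _) (Finset.mem_singleton_self _) (by simp)]
    simp [θ, hidingProfile_fst hk, truthfulProfile_fst_of_ne (rival_ne_follower hk).symm]
  have h := DBM_agent_eq_runAux_after_fillers hk hθ (hidingProfile_fst hk)
  rw [runAux_cons_of_vstar_le (by rw [hpool_rival, hprice_rival]; exact zero_le)] at h
  simp only [update_of_ne (rival_ne_agent hk).symm, show 2 - 1 = 1 from rfl] at h
  rw [runAux_cons_of_vstar_le (by rw [hpool_agent, hprice_agent]; simp [θ, hidingProfile])] at h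
  simp only [update_self, hpool_agent, hprice_agent, Prod.mk.injEq] at h
  exact ⟨h.1, by simpa using h.2⟩

end Witness

/-- **Proposition 4.** For every `k ≥ 2`, in the distance-based mechanism
with `k` units, reporting `(v_i, ∅)` (the true value while hiding all followers) is not a
dominant strategy: there are a buyer `i` with true type `θ i = (v_i, r_i)` and a profile
of reports of the other buyers such that the utility from the truthful report strictly
exceeds the utility from the report `(v_i, ∅)`. -/
theorem distanceBased_hiding_not_dominant (k : ℕ) (hk : 2 ≤ k) :
    ∃ (n : ℕ) (θ : Profile (Fin n)) (rs : Finset (Fin n)) (i : Fin n),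
      ((θ i).1 : ℝ) * ((DBM k (Function.update θ i ((θ i).1, ∅)) rs).1 i : ℝ) -
          ((DBM k (Function.update θ i ((θ i).1, ∅)) rs).2 i : ℝ) <
        ((θ i).1 : ℝ) * ((DBM k θ rs).1 i : ℝ) - ((DBM k θ rs).2 i : ℝ) := by
  refine ⟨k + 1, truthfulProfile k, directBuyers k, agent k, ?_⟩
  have hhiding : update (truthfulProfile k) (agent k) ((truthfulProfile k (agent k)).1, ∅) =
      hidingProfile k := by
    rw [truthfulProfile_agent hk]; rfl
  obtain ⟨hwin, hpay⟩ := DBM_truthfulProfile_agent hk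
  obtain ⟨hwin', hpay'⟩ := DBM_hidingProfile_agent hk
  rw [hhiding, hwin, hpay, hwin', hpay', truthfulProfile_agent hk]
  norm_num

end SNA
end
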